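/- (Lemma 4, first part.) Let κ > 0, let σ satisfy 0 < σ ≤ 1, and let z ≤ 0. If κ ≤ σ·τ(z), then z² ≤ log(1/(2πκ²)). -/

import Mathlib

open Real MeasureTheory Filter

/-- The standard normal probability density function φ. -/
noncomputable def stdNormalPDF (z : ℝ) : ℝ := (Real.sqrt (2 * Real.pi))⁻¹ * Real.exp (-z ^ 2 / 2)

/-- The standard normal cumulative distribution function Φ. -/
noncomputable def stdNormalCDF (z : ℝ) : ℝ := ∫ t in Set.Iic z, stdNormalPDF t

/-- τ(z) = z Φ(z) + φ(z). -/
noncomputable def tau (z : ℝ) : ℝ := z * stdNormalCDF z + stdNormalPDF z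

/-! For `z ≤ 0` the term `z Φ(z)` is nonpositive, so the stopping criterion gives
`κ ≤ σ τ(z) ≤ τ(z) ≤ φ(z) = exp (-z² / 2) / √(2π)`; squaring and taking logarithms yields the
bound on `z²`. -/

lemma stdNormalPDF_nonneg (z : ℝ) : 0 ≤ stdNormalPDF z := by
  unfold stdNormalPDF
  positivity

lemma stdNormalPDF_sq (z : ℝ) : stdNormalPDF z ^ 2 = exp (-z ^ 2) / (2 * π) := by
  rw [stdNormalPDF, mul_pow, inv_pow, sq_sqrt (by positivity), ← exp_nat_mul]
  push_cast
  ring_nf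

lemma stdNormalCDF_nonneg (z : ℝ) : 0 ≤ stdNormalCDF z :=
  setIntegral_nonneg measurableSet_Iic fun t _ ↦ stdNormalPDF_nonneg t

lemma tau_le_stdNormalPDF_of_nonpos {z : ℝ} (hz : z ≤ 0) : tau z ≤ stdNormalPDF z := by
  have : z * stdNormalCDF z ≤ 0 := mul_nonpos_of_nonpos_of_nonneg hz (stdNormalCDF_nonneg z)
  unfold tau
  linarith

lemma sq_le_log_of_le_stdNormalPDF {κ z : ℝ} (hκ : 0 < κ) (h : κ ≤ stdNormalPDF z) :
    z ^ 2 ≤ log (1 / (2 * π * κ ^ 2)) := by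
  have hsq : κ ^ 2 ≤ exp (-z ^ 2) / (2 * π) := by
    rw [← stdNormalPDF_sq]
    gcongr
  rw [le_log_iff_exp_le (by positivity), one_div, le_inv_comm₀ (exp_pos _) (by positivity),
    ← exp_neg]
  rwa [le_div_iff₀ (by positivity), mul_comm] at hsq

theorem lemma4_first_part (κ σ z : ℝ) (hκ : 0 < κ) (hσ0 : 0 < σ) (hσ1 : σ ≤ 1)
    (hz : z ≤ 0) (h : κ ≤ σ * tau z) :
    z ^ 2 ≤ Real.log (1 / (2 * Real.pi * κ ^ 2)) := by
  have hτ : 0 < tau z := pos_of_mul_pos_right (hκ.trans_le h) hσ0.le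
  refine sq_le_log_of_le_stdNormalPDF hκ ?_
  calc κ ≤ σ * tau z := h
    _ ≤ tau z := mul_le_of_le_one_left hτ.le hσ1
    _ ≤ stdNormalPDF z := tau_le_stdNormalPDF_of_nonpos hz
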